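/- Let x_1, …, x_n ∈ ℝ^p be pairwise distinct vectors and define the n×n matrix A with entries A_{ij} = Σ_{r=1}^n A^{(r)}_{ij}, where A^{(r)}_{ij} is the (normalized) solid angle measure of the set of directions g ∈ S^{p−1} such that both x_i' g ≤ x_r' g and x_j' g ≤ x_r' g. Then A is symmetric positive definite. -/

import Mathlib

open MeasureTheory Metric Module Topology Finset
open scoped RealInnerProductSpace ENNReal NNReal Matrix

/-! With `F_r(g) = ∑ᵢ cᵢ 1{⟪xᵢ, g⟫ ≤ ⟪x_r, g⟫}`, the quadratic form of `A` is
`cᵀ A c = ∑_r ∫ F_r² dμ ≥ 0`. If it vanishes, all `F_r(g)` vanish for `μ`-a.e. `g`. The great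
spheres `⟪xᵢ - xⱼ, g⟫ = 0` are null, so such a `g` can be chosen with the `⟪xᵢ, g⟫` pairwise
distinct; ordering the points by these values makes the system `F_r(g) = 0` triangular, hence
`c = 0`.

That `μ` is a probability measure for which great spheres are null comes from comparing
`μH[p-1]` on the sphere with `μH[p-1]` on a hyperplane `v⊥`, where it is a Haar measure: a great
sphere is the unit sphere of some `v⊥`, orthogonal projection onto `v⊥` is `1`-Lipschitz and maps
the sphere onto the unit ball of `v⊥`, and radial projection from the tangent hyperplane at `e` is
Lipschitz and covers the cap around `e`. -/

theorem lipschitzOnWith_normalize {V : Type*} [NormedAddCommGroup V] [NormedSpace ℝ V] :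
    LipschitzOnWith 2 (NormedSpace.normalize : V → V) {x | 1 ≤ ‖x‖} := by
  refine LipschitzOnWith.of_dist_le_mul fun x (hx : 1 ≤ ‖x‖) y (hy : 1 ≤ ‖y‖) => ?_
  have hy0 : 0 < ‖y‖ := one_pos.trans_le hy
  have hsplit : NormedSpace.normalize x - NormedSpace.normalize y =
      ‖x‖⁻¹ • (x - y) + (‖x‖⁻¹ - ‖y‖⁻¹) • y := by
    simp only [NormedSpace.normalize, smul_sub, sub_smul]; abel
  have h₁ : ‖‖x‖⁻¹ • (x - y)‖ ≤ ‖x - y‖ := by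
    rw [norm_smul, norm_inv, norm_norm]
    exact mul_le_of_le_one_left (norm_nonneg _) (inv_le_one_of_one_le₀ hx)
  have h₂ : ‖(‖x‖⁻¹ - ‖y‖⁻¹) • y‖ ≤ ‖x - y‖ := by
    have : (‖x‖⁻¹ - ‖y‖⁻¹) * ‖y‖ = ‖x‖⁻¹ * (‖y‖ - ‖x‖) := by field_simp
    rw [norm_smul, Real.norm_eq_abs, ← abs_norm y, ← abs_mul, abs_norm, this, abs_mul, abs_inv,
      abs_norm]
    exact (mul_le_of_le_one_left (abs_nonneg _) (inv_le_one_of_one_le₀ hx)).trans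
      ((abs_norm_sub_norm_le y x).trans_eq (norm_sub_rev y x))
  rw [dist_eq_norm, dist_eq_norm, hsplit]
  push_cast
  linarith [norm_add_le (‖x‖⁻¹ • (x - y)) ((‖x‖⁻¹ - ‖y‖⁻¹) • y)]

section Sphere

variable {E : Type*} [NormedAddCommGroup E] [InnerProductSpace ℝ E] [MeasurableSpace E]
  [BorelSpace E] {d : ℕ} [Fact (finrank ℝ E = d + 1)]

theorem isAddHaarMeasure_hausdorffMeasure_orthogonal_span_singleton {v : E} (hv : v ≠ 0) :
    (μH[d] : Measure (ℝ ∙ v)ᗮ).IsAddHaarMeasure := by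
  have : FiniteDimensional ℝ E := .of_fact_finrank_eq_succ d
  rw [← Submodule.finrank_orthogonal_span_singleton (𝕜 := ℝ) (n := d) hv]
  infer_instance

theorem hausdorffMeasure_sphere_inter_orthogonal_eq_zero {v : E} (hv : v ≠ 0) :
    μH[d] (sphere (0 : E) 1 ∩ (ℝ ∙ v)ᗮ) = 0 := by
  have : FiniteDimensional ℝ E := .of_fact_finrank_eq_succ d
  have := isAddHaarMeasure_hausdorffMeasure_orthogonal_span_singleton (d := d) hv
  have hsub : sphere (0 : E) 1 ∩ (ℝ ∙ v)ᗮ ⊆ Subtype.val '' sphere (0 : (ℝ ∙ v)ᗮ) 1 :=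
    fun g ⟨hg, hgv⟩ => ⟨⟨g, hgv⟩, by simpa using hg, rfl⟩
  refine measure_mono_null hsub ?_
  rw [isometry_subtype_coe.hausdorffMeasure_image (.inl d.cast_nonneg)]
  exact Measure.addHaar_sphere_of_ne_zero _ _ one_ne_zero

theorem hausdorffMeasure_sphere_pos : 0 < μH[d] (sphere (0 : E) 1) := by
  have : FiniteDimensional ℝ E := .of_fact_finrank_eq_succ d
  have : Nontrivial E := Module.nontrivial_of_finrank_eq_succ (Fact.out : finrank ℝ E = d + 1)
  obtain ⟨v, hv⟩ := exists_norm_eq E zero_le_one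
  have hv0 : v ≠ 0 := norm_ne_zero_iff.1 (by simp [hv])
  have := isAddHaarMeasure_hausdorffMeasure_orthogonal_span_singleton (d := d) hv0
  set K := (ℝ ∙ v)ᗮ
  have hsub : ball (0 : K) 1 ⊆ K.orthogonalProjectionOnto '' sphere 0 1 := by
    intro w hw
    rw [mem_ball_zero_iff] at hw
    have hwv : ⟪(w : E), v⟫ = 0 := by
      rw [real_inner_comm]; exact Submodule.mem_orthogonal_singleton_iff_inner_right.1 w.2
    refine ⟨w + √(1 - ‖w‖ ^ 2) • v, ?_, ?_⟩
    · have h1 : 0 ≤ 1 - ‖w‖ ^ 2 := by nlinarith [norm_nonneg w]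
      rw [mem_sphere_zero_iff_norm, ← pow_eq_one_iff_of_nonneg (norm_nonneg _) two_ne_zero,
        norm_add_sq_real, real_inner_smul_right, hwv, norm_smul, hv, Real.norm_eq_abs,
        abs_of_nonneg (Real.sqrt_nonneg _)]
      rw [mul_one, Real.sq_sqrt h1, Submodule.coe_norm]
      ring
    · rw [map_add, map_smul, K.orthogonalProjectionOnto_mem_subspace_eq_self,
        Submodule.orthogonalProjectionOnto_orthogonalComplement_singleton_eq_zero, smul_zero,
        add_zero]
  calc (0 : ℝ≥0∞) < μH[d] (ball (0 : K) 1) := measure_ball_pos _ _ one_pos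
    _ ≤ μH[d] (K.orthogonalProjectionOnto '' sphere (0 : E) 1) := measure_mono hsub
    _ ≤ 1 ^ (d : ℝ) * μH[d] (sphere (0 : E) 1) :=
      K.lipschitzWith_orthogonalProjectionOnto.hausdorffMeasure_image_le d.cast_nonneg _
    _ = μH[d] (sphere (0 : E) 1) := by simp

theorem hausdorffMeasure_sphere_cap_lt_top {e : E} (he : ‖e‖ = 1) :
    μH[d] {g ∈ sphere (0 : E) 1 | 1 / 2 < ⟪e, g⟫} < ∞ := by
  have : FiniteDimensional ℝ E := .of_fact_finrank_eq_succ d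
  have := isAddHaarMeasure_hausdorffMeasure_orthogonal_span_singleton (d := d)
    (norm_ne_zero_iff.1 (by simp [he]) : e ≠ 0)
  set K := (ℝ ∙ e)ᗮ
  set f : K → E := fun w => NormedSpace.normalize (e + (w : E))
  have hmaps : Set.MapsTo (fun w : K => e + (w : E)) (closedBall 0 3) {x | 1 ≤ ‖x‖} := by
    intro w _
    have hew : ⟪e, (w : E)⟫ = 0 := Submodule.mem_orthogonal_singleton_iff_inner_right.1 w.2
    simpa [inner_add_right, hew, real_inner_self_eq_norm_sq, he] using
      real_inner_le_norm e (e + (w : E))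
  have hf : LipschitzOnWith 2 f (closedBall 0 3) := by
    have htrans : Isometry fun w : K => e + (w : E) :=
      (IsometryEquiv.addLeft e).isometry.comp isometry_subtype_coe
    simpa [f, Function.comp_def] using
      lipschitzOnWith_normalize.comp htrans.lipschitz.lipschitzOnWith hmaps
  have hsub : {g ∈ sphere (0 : E) 1 | 1 / 2 < ⟪e, g⟫} ⊆ f '' closedBall 0 3 := by
    rintro g ⟨hg, hlt⟩
    rw [mem_sphere_zero_iff_norm] at hg
    have ha : 0 < ⟪e, g⟫ := by linarith
    refine ⟨⟨⟪e, g⟫⁻¹ • g - e, Submodule.mem_orthogonal_singleton_iff_inner_right.2 ?_⟩, ?_, ?_⟩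
    · rw [inner_sub_right, real_inner_smul_right, inv_mul_cancel₀ ha.ne',
        real_inner_self_eq_norm_sq, he]
      norm_num
    · rw [mem_closedBall_zero_iff, Submodule.coe_norm]
      calc ‖⟪e, g⟫⁻¹ • g - e‖ ≤ ‖⟪e, g⟫⁻¹ • g‖ + ‖e‖ := norm_sub_le _ _
        _ ≤ 2 + 1 := by
          rw [norm_smul, hg, mul_one, he, Real.norm_eq_abs, abs_inv, abs_of_pos ha]
          gcongr
          rw [inv_le_comm₀ ha two_pos]; linarith
        _ = 3 := by norm_num
    · simp only [f, add_sub_cancel, NormedSpace.normalize_smul_of_pos (inv_pos.2 ha),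
        NormedSpace.normalize_eq_self_of_norm_eq_one hg]
  calc μH[d] {g ∈ sphere (0 : E) 1 | 1 / 2 < ⟪e, g⟫} ≤ μH[d] (f '' closedBall 0 3) :=
        measure_mono hsub
    _ ≤ (2 : ℝ≥0) ^ (d : ℝ) * μH[d] (closedBall (0 : K) 3) :=
        hf.hausdorffMeasure_image_le d.cast_nonneg
    _ < ∞ := ENNReal.mul_lt_top (by simp) measure_closedBall_lt_top

theorem hausdorffMeasure_sphere_lt_top : μH[d] (sphere (0 : E) 1) < ∞ := by
  have : FiniteDimensional ℝ E := .of_fact_finrank_eq_succ d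
  refine (isCompact_sphere 0 1).measure_lt_top_of_nhdsWithin fun e he => ?_
  rw [mem_sphere_zero_iff_norm] at he
  have hcap : {g : E | 1 / 2 < ⟪e, g⟫} ∈ 𝓝 e := by
    refine IsOpen.mem_nhds (isOpen_lt continuous_const (continuous_const.inner continuous_id)) ?_
    simp only [Set.mem_ofPred_eq, real_inner_self_eq_norm_sq, he]
    norm_num
  exact ⟨_, inter_mem_nhdsWithin _ hcap, hausdorffMeasure_sphere_cap_lt_top he⟩

end Sphere

theorem eq_zero_of_forall_sum_filter_le_eq_zero {ι α M : Type*} [Fintype ι] [LinearOrder α]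
    [AddCommGroup M] {t : ι → α} (ht : Function.Injective t) {c : ι → M}
    (h : ∀ r, ∑ i with t i ≤ t r, c i = 0) : c = 0 := by
  classical
  funext j
  -- the `t`-values below `t j` are exactly those at most `t r`, for `r` the largest of them
  have hlt : ∑ i with t i < t j, c i = 0 := by
    rcases (univ.filter fun i => t i < t j).eq_empty_or_nonempty with hempty | hne
    · rw [hempty, sum_empty]
    · obtain ⟨r, hr, hmax⟩ := exists_max_image _ t hne
      rw [mem_filter] at hr
      convert h r using 2
      ext i
      simp only [mem_filter, mem_univ, true_and] at hmax ⊢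
      exact ⟨hmax i, fun hi => hi.trans_lt hr.2⟩
  have hle : univ.filter (fun i => t i ≤ t j) = insert j (univ.filter fun i => t i < t j) := by
    ext i
    simp [le_iff_lt_or_eq, ht.eq_iff, or_comm]
  simpa [hle, hlt] using h j

section IndicatorGram

variable {α ι : Type*} [MeasurableSpace α] [Fintype ι] {μ : Measure α} [IsFiniteMeasure μ]

theorem memLp_sum_indicator_const {s : ι → Set α} (hs : ∀ i, MeasurableSet (s i)) (c : ι → ℝ)
    (p : ENNReal) : MemLp (fun g => ∑ i, (s i).indicator (fun _ => c i) g) p μ :=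
  memLp_finsetSum _ fun i _ => (memLp_const (c i)).indicator (hs i)

theorem integral_sq_sum_indicator_const {s : ι → Set α} (hs : ∀ i, MeasurableSet (s i))
    (c : ι → ℝ) : ∫ g, (∑ i, (s i).indicator (fun _ => c i) g) ^ 2 ∂μ =
      ∑ i, ∑ j, c i * c j * μ.real (s i ∩ s j) := by
  have hint : ∀ i j, Integrable ((s i ∩ s j).indicator fun _ => c i * c j) μ := fun i j =>
    (integrable_const _).indicator ((hs i).inter (hs j))
  simp_rw [sq, sum_mul_sum, ← Set.inter_indicator_mul]
  rw [integral_finsetSum _ fun i _ => integrable_finsetSum _ fun j _ => hint i j]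
  refine sum_congr rfl fun i _ => ?_
  rw [integral_finsetSum _ fun j _ => hint i j]
  refine sum_congr rfl fun j _ => ?_
  rw [integral_indicator_const _ ((hs i).inter (hs j)), smul_eq_mul, mul_comm]

variable {κ : Type*} [Fintype κ]

theorem posDef_sum_measureReal_inter [NeZero μ] {s : ι → κ → Set α}
    (hs : ∀ i r, MeasurableSet (s i r))
    (hind : ∀ᵐ g ∂μ, ∀ c : ι → ℝ, (∀ r, ∑ i, (s i r).indicator (fun _ => c i) g = 0) → c = 0) :
    (Matrix.of fun i j => ∑ r, μ.real (s i r ∩ s j r)).PosDef := by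
  refine Matrix.PosDef.of_dotProduct_mulVec_pos ?_ fun c hc => ?_
  · ext i j
    simp [Set.inter_comm]
  set F : κ → α → ℝ := fun r g => ∑ i, (s i r).indicator (fun _ => c i) g
  have hquad : star c ⬝ᵥ (Matrix.of (fun i j => ∑ r, μ.real (s i r ∩ s j r)) *ᵥ c) =
      ∑ r, ∫ g, F r g ^ 2 ∂μ := by
    simp only [F, integral_sq_sum_indicator_const (hs · _)]
    simp only [dotProduct, Matrix.mulVec, Matrix.of_apply, star_trivial, Pi.star_apply, mul_sum,
      sum_mul]
    refine (sum_congr rfl fun i _ => sum_comm).trans (sum_comm.trans ?_)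
    exact sum_congr rfl fun r _ => sum_congr rfl fun i _ => sum_congr rfl fun j _ => by ring
  have hnonneg : ∀ r, 0 ≤ ∫ g, F r g ^ 2 ∂μ := fun r => integral_nonneg fun g => sq_nonneg _
  rw [hquad]
  refine (sum_nonneg fun r _ => hnonneg r).lt_of_ne fun hzero => hc ?_
  have hF : ∀ r, ∀ᵐ g ∂μ, F r g = 0 := fun r => by
    have := (sum_eq_zero_iff_of_nonneg fun r _ => hnonneg r).1 hzero.symm r (mem_univ r)
    filter_upwards [(integral_eq_zero_iff_of_nonneg (fun g => sq_nonneg (F r g))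
      ((memLp_sum_indicator_const (hs · r) c 2).integrable_sq)).1 this] with g hg
    exact pow_eq_zero_iff two_ne_zero |>.1 hg
  obtain ⟨g, hg, hFg⟩ := (hind.and (ae_all_iff.2 hF)).exists
  exact hg c hFg

end IndicatorGram

theorem ae_injective_inner {E ι : Type*} [NormedAddCommGroup E] [InnerProductSpace ℝ E]
    [MeasurableSpace E] [Countable ι] {μ : Measure E}
    (hμ : ∀ v : E, v ≠ 0 → μ {g | ⟪v, g⟫ = 0} = 0) {x : ι → E} (hx : Function.Injective x) :
    ∀ᵐ g ∂μ, Function.Injective fun i => ⟪x i, g⟫ := by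
  have hpair : ∀ i j, ∀ᵐ g ∂μ, ⟪x i, g⟫ = ⟪x j, g⟫ → i = j := fun i j => by
    rcases eq_or_ne i j with rfl | hij
    · exact Filter.Eventually.of_forall fun _ _ => rfl
    · refine ae_iff.2 (measure_mono_null (fun g hg => ?_) (hμ _ (sub_ne_zero.2 (hx.ne hij))))
      simp only [Set.mem_ofPred_eq, Classical.not_imp] at hg
      simp [inner_sub_left, sub_eq_zero, hg.1]
  filter_upwards [ae_all_iff.2 fun i => ae_all_iff.2 (hpair i)] with g hg i j using hg i j

/-- Lemma 2: if `x 1, …, x n` are pairwise distinct vectors of `ℝ^p`, the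
matrix with entries `A i j = Σ_r μ {g ∈ S^{p-1} : x i ⋅ g ≤ x r ⋅ g and
x j ⋅ g ≤ x r ⋅ g}`, where `μ` is the normalized surface (solid angle) measure
on the sphere, is symmetric positive definite. -/
theorem Adot_posDef
    {n p : ℕ} (hp : 1 ≤ p)
    (x : Fin n → EuclideanSpace ℝ (Fin p))
    (hdist : Function.Injective x)
    (S : Set (EuclideanSpace ℝ (Fin p)))
    (hS : S = Metric.sphere (0 : EuclideanSpace ℝ (Fin p)) 1)
    (μ : Measure (EuclideanSpace ℝ (Fin p)))
    (hμ : μ = ((μH[(p : ℝ) - 1]) S)⁻¹ • (μH[(p : ℝ) - 1]).restrict S)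
    (A : Matrix (Fin n) (Fin n) ℝ)
    (hA : ∀ i j, A i j = ∑ r : Fin n,
      (μ {g | ⟪x i, g⟫ ≤ ⟪x r, g⟫ ∧ ⟪x j, g⟫ ≤ ⟪x r, g⟫}).toReal) :
    A.PosDef := by
  obtain ⟨d, rfl⟩ := Nat.exists_eq_add_of_le' hp
  have : Fact (finrank ℝ (EuclideanSpace ℝ (Fin (d + 1))) = d + 1) := ⟨finrank_euclideanSpace_fin⟩
  simp only [Nat.cast_add, Nat.cast_one, add_sub_cancel_right] at hμ
  subst hS
  have : IsProbabilityMeasure μ := hμ ▸ ProbabilityTheory.cond_isProbabilityMeasure_of_finite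
    hausdorffMeasure_sphere_pos.ne' hausdorffMeasure_sphere_lt_top.ne
  have hnull : ∀ v ≠ 0, μ {g | ⟪v, g⟫ = 0} = 0 := fun v hv => by
    have hset : {g | ⟪v, g⟫ = 0} = ((ℝ ∙ v)ᗮ : Set (EuclideanSpace ℝ (Fin (d + 1)))) := by
      ext g; exact Submodule.mem_orthogonal_singleton_iff_inner_right.symm
    rw [hμ, Measure.smul_apply, Measure.restrict_apply' isClosed_sphere.measurableSet, hset,
      Set.inter_comm, hausdorffMeasure_sphere_inter_orthogonal_eq_zero hv, smul_zero]
  have hA' : A = Matrix.of fun i j =>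
      ∑ r, μ.real ({g | ⟪x i, g⟫ ≤ ⟪x r, g⟫} ∩ {g | ⟪x j, g⟫ ≤ ⟪x r, g⟫}) :=
    Matrix.ext fun i j => hA i j
  rw [hA']
  refine posDef_sum_measureReal_inter
    (fun i r => measurableSet_le (by fun_prop) (by fun_prop)) ?_
  filter_upwards [ae_injective_inner hnull hdist] with g hg c hc
  refine eq_zero_of_forall_sum_filter_le_eq_zero hg fun r => ?_
  rw [← hc r, sum_indicator_eq_sum_filter]
  rfl
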